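/- For a parse tree of a context-free hyperedge replacement grammar, any two orders of applying the production rules that are consistent with the tree structure (i.e., a parent rule is applied before its children) yield isomorphic hypergraphs; in particular the parse sequence obtained by a depth-first traversal generates the same hypergraph as the parse tree. -/

import Mathlib

/-- A labeled hypergraph over the node universe `ℕ`, with ordered attachment: each
hyperedge is a duplicate-free list of attachment nodes together with a label. -/
structure HG (L' : Type) where
  V : Finset ℕ
  E : Multiset (List ℕ × L')

/-- Isomorphism of hypergraphs: a renaming of nodes that is injective on the node set,
maps the node set onto the other node set, and maps the hyperedge multiset onto the
other hyperedge multiset (preserving labels and attachment order). -/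
def HGIso {L' : Type} (H₁ H₂ : HG L') : Prop :=
  ∃ g : ℕ → ℕ, Set.InjOn g (H₁.V : Set ℕ) ∧ H₁.V.image g = H₂.V ∧
    H₁.E.map (fun ed => (ed.1.map g, ed.2)) = H₂.E

/-- The right-hand side of a production rule: a hypergraph with an ordered list of
external nodes. -/
structure PRule (L' : Type) where
  ext : List ℕ
  rhs : HG L'
  ext_nodup : ext.Nodup
  ext_sub : ∀ x ∈ ext, x ∈ rhs.V
  edges_sub : ∀ ed ∈ rhs.E, (∀ x ∈ ed.1, x ∈ rhs.V) ∧ ed.1.Nodup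

variable {L ι : Type}

/-- Apply the rule attached to parse-tree node `i`: the (unique) non-terminal hyperedge of
`H` labeled `Sum.inr i` is deleted and a freshly renamed copy of the right-hand side
`(rl i).rhs` is glued in, identifying the `k`-th external node with the `k`-th attachment
node of the replaced hyperedge. -/
def ApplyAt [DecidableEq L] [DecidableEq ι] (rl : ι → PRule (L ⊕ ι)) (i : ι)
    (H H' : HG (L ⊕ ι)) : Prop :=
  ∃ (e : List ℕ × (L ⊕ ι)) (f : ℕ → ℕ),
    e ∈ H.E ∧ e.2 = Sum.inr i ∧
    Set.InjOn f ((rl i).rhs.V : Set ℕ) ∧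
    (∀ v ∈ (rl i).rhs.V, v ∉ (rl i).ext → f v ∉ H.V) ∧
    (rl i).ext.map f = e.1 ∧
    H'.V = H.V ∪ ((rl i).rhs.V \ (rl i).ext.toFinset).image f ∧
    H'.E = H.E.erase e + (rl i).rhs.E.map (fun ed => (ed.1.map f, ed.2))

/-- Sequential application of the rules at the parse-tree nodes listed in `σ`. -/
inductive ApplySeq [DecidableEq L] [DecidableEq ι] (rl : ι → PRule (L ⊕ ι)) :
    List ι → HG (L ⊕ ι) → HG (L ⊕ ι) → Prop
  | nil (H : HG (L ⊕ ι)) : ApplySeq rl [] H H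
  | cons {i : ι} {σ : List ι} {H H' H'' : HG (L ⊕ ι)} :
      ApplyAt rl i H H' → ApplySeq rl σ H' H'' → ApplySeq rl (i :: σ) H H''

/-- An order of rule applications consistent with the parse-tree structure: every tree
node occurs exactly once, and each parent is applied before its children. -/
def ConsistentOrder [DecidableEq ι] (ρ : ι) (pa : ι → ι) (σ : List ι) : Prop :=
  σ.Nodup ∧ (∀ i : ι, i ∈ σ) ∧
    ∀ j : ι, j ≠ ρ → ∀ (hp : pa j ∈ σ) (hj : j ∈ σ), σ.idxOf (pa j) < σ.idxOf j


/-! Rule applications at distinct non-terminal hyperedges commute. The non-terminal of the head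
of a consistent order `σ₁` is created by no rule of `σ₁` (only the parent's rule creates it, and
the parent is not later), so in a derivation along a permutation `σ₂` of `σ₁` that application
can be moved to the front; repeating this turns the derivation along `σ₂` into one along `σ₁`
with the same result. Two derivations along the same order differ only in the fresh node names
and give isomorphic results: a rule applied to isomorphic hypergraphs gives isomorphic
hypergraphs as long as the replaced non-terminal is unique, and it is, since each non-terminal
is created once, by its parent's rule. -/

lemma Multiset.eq_of_countP_le_one {α : Type*} {p : α → Prop} [DecidablePred p]
    {s : Multiset α} (h : s.countP p ≤ 1) {a b : α} (ha : a ∈ s) (hb : b ∈ s)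
    (hpa : p a) (hpb : p b) : a = b := by
  classical
  by_contra hab
  have hpos : 0 < (s.erase a).countP p :=
    Multiset.countP_pos_of_mem ((Multiset.mem_erase_of_ne (Ne.symm hab)).2 hb) hpb
  rw [← Multiset.cons_erase ha, Multiset.countP_cons_of_pos _ hpa] at h
  omega

lemma Set.InjOn.exists_extend {α β γ : Type*} [Nonempty α] {S : Set β} {T : Set α}
    {f : α → β} {g : β → γ} {f' : α → γ} (hinj : InjOn f T)
    (hagree : ∀ v ∈ T, f v ∈ S → g (f v) = f' v) :
    ∃ g' : β → γ, EqOn g' g S ∧ ∀ v ∈ T, g' (f v) = f' v := by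
  classical
  refine ⟨fun x => if x ∈ S then g x else f' (Function.invFunOn f T x),
    fun x hx => if_pos hx, fun v hv => ?_⟩
  by_cases hfv : f v ∈ S
  · exact (if_pos hfv).trans (hagree v hv hfv)
  · exact (if_neg hfv).trans (congrArg f' (hinj.leftInvOn_invFunOn hv))

lemma Set.InjOn.union_image {α β γ : Type*} {S : Set β} {T : Set α} {f : α → β}
    {g : β → γ} {f' : α → γ} (hS : InjOn g S) (hT : InjOn f' T)
    (hcomp : ∀ v ∈ T, g (f v) = f' v) (hsep : ∀ x ∈ S, ∀ v ∈ T, g x ≠ f' v) :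
    InjOn g (S ∪ f '' T) := by
  rintro x (hx | ⟨v, hv, rfl⟩) y (hy | ⟨w, hw, rfl⟩) hxy
  · exact hS hx hy hxy
  · exact absurd (hxy.trans (hcomp w hw)) (hsep x hx w hw)
  · exact absurd ((hcomp v hv).symm.trans hxy).symm (hsep y hy v hv)
  · rw [hcomp v hv, hcomp w hw] at hxy
    rw [hT hv hw hxy]

def HG.WellFormed {L' : Type} (H : HG L') : Prop := ∀ ed ∈ H.E, ∀ x ∈ ed.1, x ∈ H.V

lemma HGIso.refl {L' : Type} (H : HG L') : HGIso H H :=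
  ⟨id, Set.injOn_id _, Finset.image_id, by simp⟩

section Derivation

variable [DecidableEq L] [DecidableEq ι] {rl : ι → PRule (L ⊕ ι)}

lemma ApplyAt.wellFormed {i : ι} {H A : HG (L ⊕ ι)} (h : ApplyAt rl i H A)
    (hwf : H.WellFormed) : A.WellFormed := by
  obtain ⟨e, f, he, -, -, -, hext, hV, hE⟩ := h
  have hHA : H.V ⊆ A.V := hV ▸ Finset.subset_union_left
  intro ed hed x hx
  rw [hE] at hed
  rcases Multiset.mem_add.1 hed with hed | hed
  · exact hHA (hwf ed (Multiset.mem_of_mem_erase hed) x hx)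
  · obtain ⟨ed₀, hed₀, rfl⟩ := Multiset.mem_map.1 hed
    obtain ⟨y, hy, rfl⟩ := List.mem_map.1 hx
    by_cases hyext : y ∈ (rl i).ext
    · exact hHA (hwf e he _ (hext ▸ List.mem_map_of_mem hyext))
    · rw [hV]
      exact Finset.mem_union_right _ (Finset.mem_image_of_mem f
        (Finset.mem_sdiff.2 ⟨((rl i).edges_sub ed₀ hed₀).1 y hy, by simpa using hyext⟩))

lemma ApplyAt.swap {i k : ι} {H B C : HG (L ⊕ ι)} (hik : i ≠ k)
    (hno : ∀ ed ∈ (rl k).rhs.E, ed.2 ≠ Sum.inr i)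
    (hk : ApplyAt rl k H B) (hi : ApplyAt rl i B C) :
    ∃ A, ApplyAt rl i H A ∧ ApplyAt rl k A C := by
  obtain ⟨ek, fk, hek, hlk, hinjk, hfrk, hextk, hBV, hBE⟩ := hk
  obtain ⟨ei, fi, hei, hli, hinji, hfri, hexti, hCV, hCE⟩ := hi
  have hne : ek ≠ ei := fun h => hik (Sum.inr.inj (hli.symm.trans (h ▸ hlk)))
  have heiH : ei ∈ H.E.erase ek := by
    rw [hBE] at hei
    refine (Multiset.mem_add.1 hei).resolve_right fun h => ?_
    obtain ⟨ed₀, hed₀, rfl⟩ := Multiset.mem_map.1 h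
    exact hno ed₀ hed₀ hli
  have hekH : ek ∈ H.E.erase ei := (Multiset.mem_erase_of_ne hne).2 hek
  have hHB : H.V ⊆ B.V := hBV ▸ Finset.subset_union_left
  refine ⟨⟨H.V ∪ ((rl i).rhs.V \ (rl i).ext.toFinset).image fi,
      H.E.erase ei + (rl i).rhs.E.map (fun ed => (ed.1.map fi, ed.2))⟩,
    ⟨ei, fi, Multiset.mem_of_mem_erase heiH, hli, hinji,
      fun v hv hve hmem => hfri v hv hve (hHB hmem), hexti, rfl, rfl⟩,
    ⟨ek, fk, Multiset.mem_add.2 (Or.inl hekH), hlk, hinjk, fun v hv hve => ?_, hextk,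
      by rw [hCV, hBV, Finset.union_right_comm], ?_⟩⟩
  · have hfkB : fk v ∈ B.V := hBV ▸ Finset.mem_union_right _
      (Finset.mem_image_of_mem fk (Finset.mem_sdiff.2 ⟨hv, by simpa using hve⟩))
    simp only [Finset.mem_union, Finset.mem_image, Finset.mem_sdiff, List.mem_toFinset,
      not_or, not_exists, not_and]
    exact ⟨hfrk v hv hve, fun w ⟨hw, hwe⟩ hfw => hfri w hw hwe (hfw ▸ hfkB)⟩
  · rw [hCE, hBE, Multiset.erase_add_left_pos _ heiH, Multiset.erase_add_left_pos _ hekH,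
      Multiset.erase_comm, add_right_comm]

lemma ApplySeq.exists_applyAt_erase {σ : List ι} {H K : HG (L ⊕ ι)} {i : ι} (hi : i ∈ σ)
    (hno : ∀ k ∈ σ, ∀ ed ∈ (rl k).rhs.E, ed.2 ≠ Sum.inr i) (h : ApplySeq rl σ H K) :
    ∃ A, ApplyAt rl i H A ∧ ApplySeq rl (σ.erase i) A K := by
  induction h with
  | nil => simp at hi
  | @cons k τ H B K hk hτ ih =>
    by_cases hki : k = i
    · subst hki
      exact ⟨B, hk, by rwa [List.erase_cons_head]⟩
    · obtain ⟨C, hiB, hC⟩ := ih ((List.mem_cons.1 hi).resolve_left (Ne.symm hki))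
        fun k' hk' => hno k' (List.mem_cons_of_mem _ hk')
      obtain ⟨A, hiH, hkA⟩ := ApplyAt.swap (Ne.symm hki) (hno k List.mem_cons_self) hk hiB
      exact ⟨A, hiH, by rw [List.erase_cons_tail (by simpa using hki)]; exact .cons hkA hC⟩

structure IsParseTree (ρ : ι) (pa : ι → ι) (rl : ι → PRule (L ⊕ ι)) : Prop where
  countP_child : ∀ i j : ι, j ≠ ρ → pa j = i →
    (rl i).rhs.E.countP (fun ed => ed.2 = Sum.inr j) = 1
  parent_of_mem_rhs : ∀ i : ι, ∀ ed ∈ (rl i).rhs.E, ∀ j : ι, ed.2 = Sum.inr j →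
    j ≠ ρ ∧ pa j = i

def ParentsFirst (ρ : ι) (pa : ι → ι) (σ : List ι) : Prop :=
  ∀ j : ι, j ≠ ρ → pa j ∈ σ → j ∈ σ → σ.idxOf (pa j) < σ.idxOf j

lemma ParentsFirst.parent_not_mem {ρ i : ι} {pa : ι → ι} {τ : List ι}
    (h : ParentsFirst ρ pa (i :: τ)) (hi : i ≠ ρ) : pa i ∉ i :: τ := fun hp =>
  Nat.not_lt_zero _ (List.idxOf_cons_self (l := τ) ▸ h i hi hp List.mem_cons_self)

lemma ParentsFirst.tail {ρ i : ι} {pa : ι → ι} {τ : List ι} (hnd : (i :: τ).Nodup)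
    (h : ParentsFirst ρ pa (i :: τ)) : ParentsFirst ρ pa τ := by
  intro j hj hp hjτ
  have hi : i ∉ τ := (List.nodup_cons.1 hnd).1
  have := h j hj (List.mem_cons_of_mem _ hp) (List.mem_cons_of_mem _ hjτ)
  rw [List.idxOf_cons_ne _ (ne_of_mem_of_not_mem hp hi).symm,
    List.idxOf_cons_ne _ (ne_of_mem_of_not_mem hjτ hi).symm] at this
  omega

lemma ApplySeq.of_perm {ρ : ι} {pa : ι → ι} (hT : IsParseTree ρ pa rl) {σ σ' : List ι}
    {H K : HG (L ⊕ ι)} (hnd : σ.Nodup) (hpf : ParentsFirst ρ pa σ) (hperm : σ'.Perm σ)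
    (h : ApplySeq rl σ' H K) : ApplySeq rl σ H K := by
  induction σ generalizing σ' H with
  | nil => rw [hperm.eq_nil] at h; cases h; exact .nil _
  | cons i τ ih =>
    have hno : ∀ k ∈ σ', ∀ ed ∈ (rl k).rhs.E, ed.2 ≠ Sum.inr i := fun k hk ed hed hl => by
      obtain ⟨hi, rfl⟩ := hT.parent_of_mem_rhs k ed hed i hl
      exact hpf.parent_not_mem hi (hperm.mem_iff.1 hk)
    obtain ⟨A, hiH, hA⟩ := h.exists_applyAt_erase (hperm.mem_iff.2 List.mem_cons_self) hno
    exact .cons hiH (ih hnd.of_cons (hpf.tail hnd)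
      (by simpa using hperm.erase i) hA)

lemma HGIso.applyAt {i : ι} {H H' A A' : HG (L ⊕ ι)} (hwf : H.WellFormed)
    (hcnt : H.E.countP (fun ed => ed.2 = Sum.inr i) ≤ 1) (hiso : HGIso H H')
    (h : ApplyAt rl i H A) (h' : ApplyAt rl i H' A') : HGIso A A' := by
  obtain ⟨g, hg_inj, hg_V, hg_E⟩ := hiso
  obtain ⟨e, f, he, hl, hinj, hfr, hext, hV, hE⟩ := h
  obtain ⟨e', f', he', hl', hinj', hfr', hext', hV', hE'⟩ := h'
  have hge : ((e.1.map g, e.2) : List ℕ × (L ⊕ ι)) ∈ H'.E :=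
    hg_E ▸ Multiset.mem_map_of_mem _ he
  have hee : e' = (e.1.map g, e.2) := by
    refine Multiset.eq_of_countP_le_one (p := fun ed => ed.2 = Sum.inr i) ?_ he' hge hl' hl
    rwa [← hg_E, Multiset.countP_map, ← Multiset.countP_eq_card_filter]
  obtain ⟨g', hg'g, hg'f⟩ := hinj.exists_extend (S := (H.V : Set ℕ)) (g := g) (f' := f')
    fun v hv hfv => by
      have hve : v ∈ (rl i).ext := by_contra fun hve => hfr v hv hve hfv
      have hmap : (rl i).ext.map f' = (rl i).ext.map (g ∘ f) := by
        rw [hext', hee, ← hext, List.map_map]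
      exact (List.map_eq_map_iff.1 hmap v hve).symm
  set N := (rl i).rhs.V \ (rl i).ext.toFinset
  have hN : ∀ v ∈ N, v ∈ (rl i).rhs.V ∧ v ∉ (rl i).ext := fun v hv => by
    simpa using Finset.mem_sdiff.1 hv
  have hHV : H.V.image g' = H'.V := (Finset.image_congr hg'g).trans hg_V
  have hNV : (N.image f).image g' = N.image f' := by
    rw [Finset.image_image]
    exact Finset.image_congr fun v hv => hg'f v (hN v hv).1
  refine ⟨g', ?_, by rw [hV, hV', Finset.image_union, hHV, hNV], ?_⟩
  · rw [hV, Finset.coe_union, Finset.coe_image]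
    refine (hg_inj.congr hg'g.symm).union_image (hinj'.mono fun v hv => (hN v hv).1)
      (fun v hv => hg'f v (hN v hv).1) fun x hx v hv hxv => hfr' v (hN v hv).1 (hN v hv).2 ?_
    rw [← hxv, ← hg_V, hg'g hx]
    exact Finset.mem_image_of_mem g hx
  · have hold : (H.E.erase e).map (fun ed => (ed.1.map g', ed.2)) = H'.E.erase e' := by
      rw [hee, ← hg_E, ← Multiset.map_erase_of_mem _ _ he]
      refine Multiset.map_congr rfl fun ed hed => ?_
      rw [List.map_congr_left fun x hx =>
        hg'g (hwf ed (Multiset.mem_of_mem_erase hed) x hx)]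
    have hnew : ((rl i).rhs.E.map (fun ed => (ed.1.map f, ed.2))).map
        (fun ed => (ed.1.map g', ed.2)) = (rl i).rhs.E.map (fun ed => (ed.1.map f', ed.2)) := by
      rw [Multiset.map_map]
      refine Multiset.map_congr rfl fun ed hed => ?_
      simp only [Function.comp_apply, List.map_map, Prod.mk.injEq, and_true]
      exact List.map_congr_left fun x hx => hg'f x (((rl i).edges_sub ed hed).1 x hx)
    rw [hE, hE', Multiset.map_add, hold, hnew]

def NonterminalsBounded (ρ : ι) (pa : ι → ι) (σ : List ι) (H : HG (L ⊕ ι)) : Prop :=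
  ∀ j : ι, H.E.countP (fun ed => ed.2 = Sum.inr j) ≤ if j ≠ ρ ∧ pa j ∈ σ then 0 else 1

lemma nonterminalsBounded_start (ρ : ι) (pa : ι → ι) (σ : List ι) :
    NonterminalsBounded ρ pa σ (⟨∅, {([], Sum.inr ρ)}⟩ : HG (L ⊕ ι)) := by
  intro j
  simp only [← Multiset.cons_zero, Multiset.countP_cons, Multiset.countP_zero, Sum.inr.injEq]
  split_ifs <;> simp_all

lemma IsParseTree.nonterminalsBounded_applyAt {ρ : ι} {pa : ι → ι} (hT : IsParseTree ρ pa rl)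
    {i : ι} {τ : List ι} {H A : HG (L ⊕ ι)} (hi : i ∉ τ)
    (hH : NonterminalsBounded ρ pa (i :: τ) H) (h : ApplyAt rl i H A) :
    NonterminalsBounded ρ pa τ A := by
  obtain ⟨e, f, -, -, -, -, -, -, hE⟩ := h
  intro j
  have herase : (H.E.erase e).countP (fun ed => ed.2 = Sum.inr j) ≤
      H.E.countP (fun ed => ed.2 = Sum.inr j) :=
    Multiset.countP_le_of_le _ (Multiset.erase_le e H.E)
  have hHj := hH j
  rw [hE, Multiset.countP_add, Multiset.countP_map, ← Multiset.countP_eq_card_filter]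
  by_cases hchild : j ≠ ρ ∧ pa j = i
  · rw [hT.countP_child i j hchild.1 hchild.2, if_neg fun h => hi (hchild.2 ▸ h.2)]
    rw [if_pos ⟨hchild.1, hchild.2 ▸ List.mem_cons_self⟩] at hHj
    omega
  · rw [Multiset.countP_eq_zero.2 fun ed hed hl => hchild (hT.parent_of_mem_rhs i ed hed j hl),
      add_zero]
    refine (herase.trans hHj).trans ?_
    split_ifs <;> simp_all

lemma HGIso.applySeq {ρ : ι} {pa : ι → ι} (hT : IsParseTree ρ pa rl) {σ : List ι}
    {H H' K K' : HG (L ⊕ ι)} (hnd : σ.Nodup) (hwf : H.WellFormed)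
    (hH : NonterminalsBounded ρ pa σ H) (hiso : HGIso H H')
    (h : ApplySeq rl σ H K) (h' : ApplySeq rl σ H' K') : HGIso K K' := by
  induction h generalizing H' with
  | nil => cases h'; exact hiso
  | @cons i τ H₀ A K₀ hA _ ih =>
    cases h' with
    | cons hA' h' =>
      have hcnt := (hH i).trans (ite_le_one zero_le_one le_rfl)
      exact ih hnd.of_cons (hA.wellFormed hwf)
        (hT.nonterminalsBounded_applyAt (List.nodup_cons.1 hnd).1 hH hA)
        (hiso.applyAt hwf hcnt hA hA') h'

end Derivation

theorem stmt11_general [DecidableEq L] [DecidableEq ι]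
    (ρ : ι) (pa : ι → ι)
    (rl : ι → PRule (L ⊕ ι))
    (hchild : ∀ i j : ι, j ≠ ρ → pa j = i →
      ((rl i).rhs.E.countP (fun ed => ed.2 = Sum.inr j)) = 1)
    (hnoother : ∀ i : ι, ∀ ed ∈ (rl i).rhs.E, ∀ j : ι, ed.2 = Sum.inr j →
      (j ≠ ρ ∧ pa j = i))
    (σ₁ σ₂ : List ι) (h₁ : ConsistentOrder ρ pa σ₁) (h₂ : ConsistentOrder ρ pa σ₂)
    (H₁ H₂ : HG (L ⊕ ι))
    (hap₁ : ApplySeq rl σ₁ ⟨∅, {([], Sum.inr ρ)}⟩ H₁)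
    (hap₂ : ApplySeq rl σ₂ ⟨∅, {([], Sum.inr ρ)}⟩ H₂) :
    HGIso H₁ H₂ := by
  have hT : IsParseTree ρ pa rl := ⟨hchild, hnoother⟩
  obtain ⟨hnd₁, hmem₁, hpf₁⟩ := h₁
  obtain ⟨hnd₂, hmem₂, -⟩ := h₂
  have hperm : σ₂.Perm σ₁ :=
    (List.perm_ext_iff_of_nodup hnd₂ hnd₁).2 fun a => by simp [hmem₁ a, hmem₂ a]
  have hwf : HG.WellFormed (⟨∅, {([], Sum.inr ρ)}⟩ : HG (L ⊕ ι)) := by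
    simp [HG.WellFormed]
  exact HGIso.applySeq hT hnd₁ hwf (nonterminalsBounded_start ρ pa σ₁) (HGIso.refl _) hap₁
    (hap₂.of_perm hT hnd₁ hpf₁ hperm)

/-- For a parse tree of a context-free hyperedge replacement grammar
(nodes `ι`, root `ρ`, parent map `pa`, node `i` labeled by the production rule `rl i`,
where the non-terminal hyperedges occurring in the right-hand side of `rl i` are exactly
(one copy each of) the non-terminals corresponding to the children of `i`), any two orders
of applying the production rules that are consistent with the tree structure (parents
applied before children) yield isomorphic hypergraphs; in particular the parse sequence
obtained by a depth-first traversal generates the same hypergraph as the parse tree. -/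
theorem stmt11 [DecidableEq L] [DecidableEq ι] [Fintype ι]
    (ρ : ι) (pa : ι → ι)
    (hacyc : ∃ ht : ι → ℕ, ht ρ = 0 ∧ ∀ i : ι, i ≠ ρ → ht (pa i) < ht i)
    (rl : ι → PRule (L ⊕ ι))
    (hchild : ∀ i j : ι, j ≠ ρ → pa j = i →
      ((rl i).rhs.E.countP (fun ed => ed.2 = Sum.inr j)) = 1)
    (hnoother : ∀ i : ι, ∀ ed ∈ (rl i).rhs.E, ∀ j : ι, ed.2 = Sum.inr j →
      (j ≠ ρ ∧ pa j = i))
    (σ₁ σ₂ : List ι) (h₁ : ConsistentOrder ρ pa σ₁) (h₂ : ConsistentOrder ρ pa σ₂)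
    (H₁ H₂ : HG (L ⊕ ι))
    (hap₁ : ApplySeq rl σ₁ ⟨∅, {([], Sum.inr ρ)}⟩ H₁)
    (hap₂ : ApplySeq rl σ₂ ⟨∅, {([], Sum.inr ρ)}⟩ H₂) :
    HGIso H₁ H₂ :=
  stmt11_general ρ pa rl hchild hnoother σ₁ σ₂ h₁ h₂ H₁ H₂ hap₁ hap₂
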